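/- arXiv:1110.6414 — 2 statements merged into one kernel-verified Lean document; each statement's English description precedes it below -/
import Mathlib

section
/- Let $f_B(Q) = -\frac{a^2}{2}\mathrm{tr}(Q^2) - \frac{b^2}{3}\mathrm{tr}(Q^3) + \frac{c^2}{4}(\mathrm{tr}(Q^2))^2$ with $a^2, b^2, c^2 > 0$. Then $f_B$ attains its minimum over symmetric traceless $3\times 3$ real matrices exactly on the set of matrices of the form $Q = s_+ (n \otimes n - \frac{1}{3}I)$ where $n$ is a unit vector in $\mathbb{R}^3$ and $s_+ = \frac{b^2 + \sqrt{b^4 + 24 a^2 c^2}}{4c^2}$. -/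
/-!
On symmetric traceless `Q` with eigenvalues `x, y, z` (so `x + y + z = 0`), `fB` is a function of
`p = tr Q²` and `q = tr Q³`, and `p³ - 6 q²` is twice the discriminant `((x - y)(y - z)(z - x))²`,
so `q ≤ 2t³/9` where `p = 2t²/3`. As `fB` decreases in `q`, it is bounded below by its value on
the uniaxial state with order parameter `t`, a quartic in `t` whose minimum over `t ≥ 0` is
attained only at the positive root `s₊` of `2c²s² = b²s + 3a²`. In the equality case
`p = 2s₊²/3` and `q = 2s₊³/9` force the spectrum `(2s₊/3, -s₊/3, -s₊/3)`, and the spectral theorem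
rebuilds `Q = s₊ (n ⊗ n - I/3)` from a unit eigenvector `n` of `2s₊/3`.
-/

open Matrix Finset

/-- `tr(Q²) = Qᵢⱼ Qᵢⱼ` with summation convention. -/
def tr2 (Q : Matrix (Fin 3) (Fin 3) ℝ) : ℝ := ∑ i, ∑ j, Q i j * Q i j

/-- `tr(Q³) = Qᵢⱼ Qⱼₚ Qₚᵢ` with summation convention. -/
def tr3 (Q : Matrix (Fin 3) (Fin 3) ℝ) : ℝ := ∑ i, ∑ j, ∑ p, Q i j * Q j p * Q p i

/-- The bulk energy density. -/
noncomputable def fB (a2 b2 c2 : ℝ) (Q : Matrix (Fin 3) (Fin 3) ℝ) : ℝ :=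
  -(a2 / 2) * tr2 Q - (b2 / 3) * tr3 Q + (c2 / 4) * (tr2 Q) ^ 2

/-- Symmetric traceless matrices. -/
def memS0 (Q : Matrix (Fin 3) (Fin 3) ℝ) : Prop := Q.IsSymm ∧ Q.trace = 0

noncomputable def bulkEnergy (a b c p q : ℝ) : ℝ := -(a / 2) * p - (b / 3) * q + (c / 4) * p ^ 2

section Scalar

variable {a b c s : ℝ}

lemma bulkEnergy_uniaxial_sub (hs : 2 * c * s ^ 2 = b * s + 3 * a) (t : ℝ) :
    bulkEnergy a b c (2 * t ^ 2 / 3) (2 * t ^ 3 / 9) -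
        bulkEnergy a b c (2 * s ^ 2 / 3) (2 * s ^ 3 / 9)
      = (t - s) ^ 2 * (3 * c * (t + s) ^ 2 - b * (2 * t + s)) / 27 := by
  unfold bulkEnergy
  linear_combination ((t ^ 2 - s ^ 2) / 9) * hs

lemma bulkEnergy_uniaxial_lt (ha : 0 ≤ a) (hc : 0 < c) (hs0 : 0 < s)
    (hs : 2 * c * s ^ 2 = b * s + 3 * a) {t : ℝ} (ht : 0 ≤ t) (hts : t ≠ s) :
    bulkEnergy a b c (2 * s ^ 2 / 3) (2 * s ^ 3 / 9) <
      bulkEnergy a b c (2 * t ^ 2 / 3) (2 * t ^ 3 / 9) := by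
  have hb : b ≤ 2 * c * s := le_of_mul_le_mul_right (by nlinarith) hs0
  have hfactor : 0 < 3 * c * (t + s) ^ 2 - b * (2 * t + s) := by
    nlinarith [mul_pos hc hs0, mul_nonneg hc.le (sq_nonneg t),
      mul_nonneg (mul_nonneg hc.le ht) hs0.le]
  rw [← sub_pos, bulkEnergy_uniaxial_sub hs]
  have := sq_pos_of_ne_zero (sub_ne_zero.2 hts)
  positivity

lemma le_of_six_mul_sq_le {q t : ℝ} (ht : 0 ≤ t) (h : 6 * q ^ 2 ≤ (2 * t ^ 2 / 3) ^ 3) :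
    q ≤ 2 * t ^ 3 / 9 :=
  (abs_le_of_sq_le_sq' (by nlinarith) (by positivity)).2

theorem bulkEnergy_uniaxial_le_and_eq_of_le (ha : 0 ≤ a) (hb : 0 < b) (hc : 0 < c) (hs0 : 0 < s)
    (hs : 2 * c * s ^ 2 = b * s + 3 * a) {p q : ℝ} (hp : 0 ≤ p) (hpq : 6 * q ^ 2 ≤ p ^ 3) :
    bulkEnergy a b c (2 * s ^ 2 / 3) (2 * s ^ 3 / 9) ≤ bulkEnergy a b c p q ∧
      (bulkEnergy a b c p q ≤ bulkEnergy a b c (2 * s ^ 2 / 3) (2 * s ^ 3 / 9) →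
        p = 2 * s ^ 2 / 3 ∧ q = 2 * s ^ 3 / 9) := by
  obtain ⟨t, ht, rfl⟩ : ∃ t, 0 ≤ t ∧ p = 2 * t ^ 2 / 3 :=
    ⟨√(3 * p / 2), Real.sqrt_nonneg _, by rw [Real.sq_sqrt (by positivity)]; ring⟩
  have hsplit : bulkEnergy a b c (2 * t ^ 2 / 3) q =
      bulkEnergy a b c (2 * t ^ 2 / 3) (2 * t ^ 3 / 9) + b / 3 * (2 * t ^ 3 / 9 - q) := by
    unfold bulkEnergy; ring
  have hgap : 0 ≤ b / 3 * (2 * t ^ 3 / 9 - q) :=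
    mul_nonneg (by positivity) (sub_nonneg.2 (le_of_six_mul_sq_le ht hpq))
  rcases eq_or_ne t s with rfl | hts
  · refine ⟨by linarith, fun hle => ⟨rfl, ?_⟩⟩
    have : b / 3 * (2 * t ^ 3 / 9 - q) = 0 := by linarith
    linarith [(mul_eq_zero.1 this).resolve_left (by positivity)]
  · have := bulkEnergy_uniaxial_lt ha hc hs0 hs ht hts
    exact ⟨by linarith, fun hle => absurd hle (by linarith)⟩

lemma six_mul_sq_sum_cube_le {x y z : ℝ} (h : x + y + z = 0) :
    6 * (x ^ 3 + y ^ 3 + z ^ 3) ^ 2 ≤ (x ^ 2 + y ^ 2 + z ^ 2) ^ 3 := by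
  -- With `z = -x - y`, `(x - y)(y - z)(z - x) = (x - y)(x + 2y)(2x + y)`, and `p³ - 6q²` is
  -- twice its square.
  obtain rfl : z = -x - y := by linarith
  nlinarith [sq_nonneg ((x - y) * (x + 2 * y) * (2 * x + y))]

lemma eq_or_eq_of_power_sums {x y z : ℝ} (h1 : x + y + z = 0)
    (h2 : x ^ 2 + y ^ 2 + z ^ 2 = 2 * s ^ 2 / 3) (h3 : x ^ 3 + y ^ 3 + z ^ 3 = 2 * s ^ 3 / 9) :
    x = 2 * s / 3 ∨ x = -s / 3 := by
  -- `x` is a root of `(T - x)(T - y)(T - z) = T³ - (p / 2) T - q / 3`, here `(T - 2s/3)(T + s/3)²`.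
  obtain rfl : z = -x - y := by linarith
  have : (x - 2 * s / 3) * (x + s / 3) ^ 2 = 0 := by
    linear_combination (x / 2) * h2 + (1 / 3) * h3
  rcases mul_eq_zero.1 this with h | h
  · left; linarith
  · right; linarith [pow_eq_zero_iff two_ne_zero |>.1 h]

lemma exists_eq_of_power_sums (μ : Fin 3 → ℝ) (hs : s ≠ 0) (h1 : ∑ i, μ i = 0)
    (h2 : ∑ i, μ i ^ 2 = 2 * s ^ 2 / 3) (h3 : ∑ i, μ i ^ 3 = 2 * s ^ 3 / 9) :
    ∃ k, μ k = 2 * s / 3 ∧ ∀ j ≠ k, μ j = -s / 3 := by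
  have hroot : ∀ i, μ i = 2 * s / 3 ∨ μ i = -s / 3 := by
    simp only [Fin.sum_univ_three] at h1 h2 h3
    intro i
    fin_cases i
    exacts [eq_or_eq_of_power_sums h1 h2 h3,
      eq_or_eq_of_power_sums (x := μ 1) (y := μ 2) (z := μ 0)
        (by linarith) (by linarith) (by linarith),
      eq_or_eq_of_power_sums (x := μ 2) (y := μ 0) (z := μ 1)
        (by linarith) (by linarith) (by linarith)]
  obtain ⟨k, hk⟩ : ∃ k, μ k ≠ -s / 3 := by
    by_contra! h
    simp only [h, Fin.sum_univ_three] at h1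
    exact hs (by linarith)
  -- Two entries `2s/3` would already give `∑ μ² ≥ 8s²/9 > 2s²/3`.
  refine ⟨k, (hroot k).resolve_right hk, fun j hjk => (hroot j).resolve_left fun hj => hs ?_⟩
  have : μ j ^ 2 + μ k ^ 2 ≤ ∑ i, μ i ^ 2 := by
    rw [← Finset.sum_pair (f := fun i => μ i ^ 2) hjk]
    exact Finset.sum_le_univ_sum_of_nonneg fun i => sq_nonneg _
  rw [hj, (hroot k).resolve_right hk, h2] at this
  nlinarith

end Scalar

namespace Matrix.IsHermitian

variable {n : Type*} [Fintype n] [DecidableEq n]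

lemma trace_pow_eq_sum_eigenvalues_pow {𝕜 : Type*} [RCLike 𝕜] {A : Matrix n n 𝕜}
    (hA : A.IsHermitian) (k : ℕ) :
    (A ^ k).trace = ∑ i, (hA.eigenvalues i : 𝕜) ^ k := by
  conv_lhs => rw [hA.spectral_theorem]
  rw [← map_pow, Unitary.conjStarAlgAut_apply, trace_mul_cycle, Unitary.coe_star_mul_self,
    one_mul, diagonal_pow, trace_diagonal]
  rfl

lemma eq_smul_vecMulVec_add_smul_one {A : Matrix n n ℝ} (hA : A.IsHermitian) {α β : ℝ} {k : n}
    (hk : hA.eigenvalues k = α + β) (ho : ∀ j ≠ k, hA.eigenvalues j = β) :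
    A = α • vecMulVec ⇑(hA.eigenvectorBasis k) ⇑(hA.eigenvectorBasis k) + β • 1 := by
  have hD : diagonal (RCLike.ofReal ∘ hA.eigenvalues) =
      α • vecMulVec (Pi.single k 1) (Pi.single k 1) + β • (1 : Matrix n n ℝ) := by
    rw [← single_eq_single_vecMulVec_single, ← diagonal_single, ← diagonal_one, ← diagonal_smul,
      ← diagonal_smul, diagonal_add]
    congr 1
    ext j
    by_cases hj : j = k
    · subst hj; simp [hk]
    · simp [ho j hj, hj]
  conv_lhs => rw [hA.spectral_theorem, hD]
  rw [map_add, map_smul, map_smul, map_one, Unitary.conjStarAlgAut_apply, mul_vecMulVec,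
    vecMulVec_mul]
  congr 3
  · exact eigenvectorUnitary_mulVec hA k
  · ext j; simp [star_apply]

lemma sum_eigenvectorBasis_mul_self {A : Matrix n n ℝ} (hA : A.IsHermitian) (k : n) :
    ∑ i, hA.eigenvectorBasis k i * hA.eigenvectorBasis k i = 1 := by
  have h := real_inner_self_eq_norm_sq (hA.eigenvectorBasis k)
  rw [hA.eigenvectorBasis.orthonormal.1 k, one_pow, PiLp.inner_apply] at h
  simpa [← sq] using h

end Matrix.IsHermitian

noncomputable def uniaxial (s : ℝ) (n : Fin 3 → ℝ) : Matrix (Fin 3) (Fin 3) ℝ :=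
  s • (vecMulVec n n - (1 / 3 : ℝ) • 1)

lemma tr2_nonneg (Q : Matrix (Fin 3) (Fin 3) ℝ) : 0 ≤ tr2 Q :=
  sum_nonneg fun _ _ => sum_nonneg fun _ _ => mul_self_nonneg _

lemma tr2_eq_trace_sq {Q : Matrix (Fin 3) (Fin 3) ℝ} (hQ : Q.IsSymm) :
    tr2 Q = (Q ^ 2).trace := by
  simp [tr2, trace, sq, mul_apply, hQ.apply]

lemma tr3_eq_trace_pow_three (Q : Matrix (Fin 3) (Fin 3) ℝ) : tr3 Q = (Q ^ 3).trace := by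
  simp only [tr3, trace, Matrix.diag, pow_succ, pow_zero, one_mul, mul_apply, sum_mul]
  exact sum_congr rfl fun i _ => sum_comm

lemma fB_eq_bulkEnergy (a b c : ℝ) (Q : Matrix (Fin 3) (Fin 3) ℝ) :
    fB a b c Q = bulkEnergy a b c (tr2 Q) (tr3 Q) := rfl

section Uniaxial

variable (s : ℝ) {n : Fin 3 → ℝ}

lemma uniaxial_memS0 (hn : ∑ i, n i * n i = 1) : memS0 (uniaxial s n) := by
  refine ⟨(IsSymm.sub (transpose_vecMulVec n n) (isSymm_one.smul _)).smul s, ?_⟩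
  rw [Fin.sum_univ_three] at hn
  simp [uniaxial, trace, Fin.sum_univ_three, vecMulVec_apply]
  linear_combination s * hn

lemma tr2_uniaxial (hn : ∑ i, n i * n i = 1) : tr2 (uniaxial s n) = 2 * s ^ 2 / 3 := by
  rw [Fin.sum_univ_three] at hn
  simp only [tr2, uniaxial, Fin.sum_univ_three, Matrix.smul_apply, Matrix.sub_apply,
    vecMulVec_apply, one_apply, smul_eq_mul, Fin.reduceEq, reduceIte]
  linear_combination (s ^ 2 * ((n 0 * n 0 + n 1 * n 1 + n 2 * n 2) + 1 / 3)) * hn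

lemma tr3_uniaxial (hn : ∑ i, n i * n i = 1) : tr3 (uniaxial s n) = 2 * s ^ 3 / 9 := by
  rw [Fin.sum_univ_three] at hn
  simp only [tr3, uniaxial, Fin.sum_univ_three, Matrix.smul_apply, Matrix.sub_apply,
    vecMulVec_apply, one_apply, smul_eq_mul, Fin.reduceEq, reduceIte]
  linear_combination (s ^ 3 * ((n 0 * n 0 + n 1 * n 1 + n 2 * n 2) ^ 2 + 1 / 3)) * hn

lemma fB_uniaxial (hn : ∑ i, n i * n i = 1) (a b c : ℝ) :
    fB a b c (uniaxial s n) = bulkEnergy a b c (2 * s ^ 2 / 3) (2 * s ^ 3 / 9) := by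
  rw [fB_eq_bulkEnergy, tr2_uniaxial s hn, tr3_uniaxial s hn]

end Uniaxial

namespace memS0

variable {Q : Matrix (Fin 3) (Fin 3) ℝ}

lemma isHermitian (hQ : memS0 Q) : Q.IsHermitian := isHermitian_iff_isSymm.2 hQ.1

lemma sum_eigenvalues (hQ : memS0 Q) : ∑ i, hQ.isHermitian.eigenvalues i = 0 := by
  simpa [hQ.2] using hQ.isHermitian.trace_eq_sum_eigenvalues.symm

lemma tr2_eq_sum_eigenvalues (hQ : memS0 Q) :
    tr2 Q = ∑ i, hQ.isHermitian.eigenvalues i ^ 2 := by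
  rw [tr2_eq_trace_sq hQ.1, hQ.isHermitian.trace_pow_eq_sum_eigenvalues_pow]
  rfl

lemma tr3_eq_sum_eigenvalues (hQ : memS0 Q) :
    tr3 Q = ∑ i, hQ.isHermitian.eigenvalues i ^ 3 := by
  rw [tr3_eq_trace_pow_three, hQ.isHermitian.trace_pow_eq_sum_eigenvalues_pow]
  rfl

lemma six_mul_sq_tr3_le (hQ : memS0 Q) : 6 * tr3 Q ^ 2 ≤ tr2 Q ^ 3 := by
  have h := hQ.sum_eigenvalues
  rw [hQ.tr2_eq_sum_eigenvalues, hQ.tr3_eq_sum_eigenvalues]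
  simp only [Fin.sum_univ_three] at h ⊢
  exact six_mul_sq_sum_cube_le h

lemma exists_eq_uniaxial (hQ : memS0 Q) {s : ℝ} (hs : s ≠ 0) (h2 : tr2 Q = 2 * s ^ 2 / 3)
    (h3 : tr3 Q = 2 * s ^ 3 / 9) : ∃ n : Fin 3 → ℝ, ∑ i, n i * n i = 1 ∧ Q = uniaxial s n := by
  obtain ⟨k, hk, ho⟩ := exists_eq_of_power_sums _ hs hQ.sum_eigenvalues
    (hQ.tr2_eq_sum_eigenvalues ▸ h2) (hQ.tr3_eq_sum_eigenvalues ▸ h3)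
  refine ⟨_, hQ.isHermitian.sum_eigenvectorBasis_mul_self k,
    (hQ.isHermitian.eq_smul_vecMulVec_add_smul_one (α := s) (β := -s / 3)
      (by rw [hk]; ring) ho).trans ?_⟩
  rw [uniaxial, smul_sub, smul_smul, sub_eq_add_neg, ← neg_smul]
  congr 3
  ring

end memS0

lemma root_two_mul_sq_eq {a b c : ℝ} (hc : 0 < c) (hd : 0 ≤ b ^ 2 + 24 * a * c) :
    2 * c * ((b + √(b ^ 2 + 24 * a * c)) / (4 * c)) ^ 2 =
      b * ((b + √(b ^ 2 + 24 * a * c)) / (4 * c)) + 3 * a := by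
  set r := √(b ^ 2 + 24 * a * c)
  have hr : r ^ 2 = b ^ 2 + 24 * a * c := Real.sq_sqrt hd
  field_simp
  linear_combination 2 * hr

section Minimum

variable {a b c s : ℝ}

theorem bulkEnergy_le_fB (ha : 0 ≤ a) (hb : 0 < b) (hc : 0 < c) (hs0 : 0 < s)
    (hs : 2 * c * s ^ 2 = b * s + 3 * a) {Q : Matrix (Fin 3) (Fin 3) ℝ} (hQ : memS0 Q) :
    bulkEnergy a b c (2 * s ^ 2 / 3) (2 * s ^ 3 / 9) ≤ fB a b c Q :=
  (bulkEnergy_uniaxial_le_and_eq_of_le ha hb hc hs0 hs (tr2_nonneg Q) hQ.six_mul_sq_tr3_le).1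

theorem exists_eq_uniaxial_of_fB_le (ha : 0 ≤ a) (hb : 0 < b) (hc : 0 < c) (hs0 : 0 < s)
    (hs : 2 * c * s ^ 2 = b * s + 3 * a) {Q : Matrix (Fin 3) (Fin 3) ℝ} (hQ : memS0 Q)
    (hle : fB a b c Q ≤ bulkEnergy a b c (2 * s ^ 2 / 3) (2 * s ^ 3 / 9)) :
    ∃ n : Fin 3 → ℝ, ∑ i, n i * n i = 1 ∧ Q = uniaxial s n := by
  obtain ⟨h2, h3⟩ :=
    (bulkEnergy_uniaxial_le_and_eq_of_le ha hb hc hs0 hs (tr2_nonneg Q) hQ.six_mul_sq_tr3_le).2 hle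
  exact hQ.exists_eq_uniaxial hs0.ne' h2 h3

end Minimum

theorem stmt0 (a2 b2 c2 : ℝ) (ha : 0 < a2) (hb : 0 < b2) (hc : 0 < c2) :
    (∃ Q₀, memS0 Q₀ ∧ ∀ Q, memS0 Q → fB a2 b2 c2 Q₀ ≤ fB a2 b2 c2 Q) ∧
    (∀ Q, memS0 Q →
      ((∀ Q', memS0 Q' → fB a2 b2 c2 Q ≤ fB a2 b2 c2 Q') ↔
        ∃ n : Fin 3 → ℝ, (∑ i, n i * n i) = 1 ∧
          Q = ((b2 + Real.sqrt (b2 ^ 2 + 24 * a2 * c2)) / (4 * c2)) •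
            (Matrix.vecMulVec n n - (1 / 3 : ℝ) • (1 : Matrix (Fin 3) (Fin 3) ℝ)))) := by
  set s := (b2 + √(b2 ^ 2 + 24 * a2 * c2)) / (4 * c2)
  have hs0 : 0 < s := by positivity
  have hs : 2 * c2 * s ^ 2 = b2 * s + 3 * a2 := root_two_mul_sq_eq hc (by positivity)
  have hmin {Q} (hQ : memS0 Q) := bulkEnergy_le_fB ha.le hb hc hs0 hs hQ
  have he : ∑ i, (![1, 0, 0] : Fin 3 → ℝ) i * ![1, 0, 0] i = 1 := by simp [Fin.sum_univ_three]
  refine ⟨⟨uniaxial s _, uniaxial_memS0 s he,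
      fun Q hQ => (fB_uniaxial s he ..).trans_le (hmin hQ)⟩,
    fun Q hQ => ⟨fun hQmin => ?_, ?_⟩⟩
  · exact exists_eq_uniaxial_of_fB_le ha.le hb hc hs0 hs hQ
      ((hQmin _ (uniaxial_memS0 s he)).trans_eq (fB_uniaxial s he ..))
  · rintro ⟨n, hn, rfl⟩ Q' hQ'
    exact (fB_uniaxial s hn ..).trans_le (hmin hQ')
end

section
/- Let $t > 0$, $h_+ = \frac{3 + \sqrt{9+8t}}{4}$, and define for $s \in [0,1]$ the function $f(s) = -\frac{1}{2}s^2 - \frac{h_+}{t}s^3 + \frac{h_+^2}{2t}s^4 + \frac{1}{2} + \frac{h_+}{t} - \frac{h_+^2}{2t}$. Then $f(s) \geq \frac{(1-s^2)^2}{4}$ for all $s \in [0,1]$. -/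
/-!
The relation `h₊² = 3h₊/2 + t/2` turns `f(s) - (1 - s²)²/4` into
`(h₊ / t) (s - 1)² (3s² + 2s + 1) / 4`, which is nonnegative for every real `s` because `h₊ > 0`,
`t > 0` and `3s² + 2s + 1` has negative discriminant.
-/

noncomputable def uniaxialBulkEnergy (t h s : ℝ) : ℝ :=
  -(1 / 2) * s ^ 2 - (h / t) * s ^ 3 + (h ^ 2 / (2 * t)) * s ^ 4
    + 1 / 2 + h / t - h ^ 2 / (2 * t)

lemma sq_eq_of_eq_quadratic_root {t h : ℝ} (ht : 0 ≤ 9 + 8 * t)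
    (hh : h = (3 + Real.sqrt (9 + 8 * t)) / 4) : h ^ 2 = 3 * h / 2 + t / 2 := by
  subst hh
  linear_combination (1 / 16 : ℝ) * Real.sq_sqrt ht

lemma uniaxialBulkEnergy_sub_eq {t h : ℝ} (ht : t ≠ 0) (hsq : h ^ 2 = 3 * h / 2 + t / 2)
    (s : ℝ) :
    uniaxialBulkEnergy t h s - (1 - s ^ 2) ^ 2 / 4
      = h / t * ((s - 1) ^ 2 * (3 * s ^ 2 + 2 * s + 1)) / 4 := by
  unfold uniaxialBulkEnergy
  field_simp
  linear_combination 4 * (s ^ 4 - 1) * hsq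

lemma quarter_sq_le_uniaxialBulkEnergy {t h : ℝ} (ht : 0 < t) (hh : 0 ≤ h)
    (hsq : h ^ 2 = 3 * h / 2 + t / 2) (s : ℝ) :
    (1 - s ^ 2) ^ 2 / 4 ≤ uniaxialBulkEnergy t h s := by
  have hquad : 0 ≤ 3 * s ^ 2 + 2 * s + 1 := by nlinarith [sq_nonneg (3 * s + 1)]
  rw [← sub_nonneg, uniaxialBulkEnergy_sub_eq ht.ne' hsq]
  positivity

theorem stmt3 (t : ℝ) (ht : 0 < t) (hplus : ℝ)
    (hh : hplus = (3 + Real.sqrt (9 + 8 * t)) / 4) :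
    ∀ s : ℝ, s ∈ Set.Icc (0 : ℝ) 1 →
      (1 - s ^ 2) ^ 2 / 4 ≤
        -(1 / 2) * s ^ 2 - (hplus / t) * s ^ 3 + (hplus ^ 2 / (2 * t)) * s ^ 4
          + 1 / 2 + hplus / t - hplus ^ 2 / (2 * t) := by
  intro s _
  have hpos : 0 ≤ hplus := by rw [hh]; positivity
  exact quarter_sq_le_uniaxialBulkEnergy ht hpos
    (sq_eq_of_eq_quadratic_root (by linarith) hh) s
end
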